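/- Let R = ℚ[L] and let φ be the unique formal power series in t + t²·R[[t]] satisfying (1 + L·t − L·φ)·φ′ = 1 + φ, with aₙ := n!·(coefficient of tⁿ in φ) ∈ ℚ[L]. Then for every n ≥ 1 there exists a finitely supported function c : ℕ → ℕ such that aₙ = Σ_k c(k)·(L − 1)^k in ℚ[L]. In particular each aₙ lies in ℤ[L] and, when written as a polynomial in T = L − 1, has nonnegative integer coefficients. -/

import Mathlib

/-!
Substituting `φ = t + ψ` turns the equation into `ψ' = t + (1 + L)ψ + L ψ ψ'`, which has no
subtraction. Reading off the coefficients of `tⁿ` with the exponential normalisation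
`bₙ = n! ψₙ` gives `b₀ = 0` and
`bₙ₊₁ = [n = 1] + (1 + L) bₙ + L Σ_{i+j=n} C(n,i) bᵢ bⱼ₊₁`,
so by strong induction every `bₙ`, and hence `aₙ = bₙ + [n = 1]`, lies in every subsemiring
containing `L`; in particular in `ℕ[𝕋]`, since `L = 𝕋 + 1`.
-/

open Finset

namespace PowerSeries

section CommSemiring

open Nat

variable {R : Type*} [CommSemiring R]

noncomputable def egfCoeff (n : ℕ) : R⟦X⟧ →ₗ[R] R := (n ! : R) • coeff n

theorem egfCoeff_apply (n : ℕ) (f : R⟦X⟧) : egfCoeff n f = n ! * coeff n f := rfl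

theorem egfCoeff_mul (n : ℕ) (f g : R⟦X⟧) :
    egfCoeff n (f * g) =
      ∑ p ∈ antidiagonal n, n.choose p.1 * (egfCoeff p.1 f * egfCoeff p.2 g) := by
  rw [egfCoeff_apply, coeff_mul, mul_sum]
  refine sum_congr rfl fun p hp => ?_
  obtain rfl := mem_antidiagonal.1 hp
  rw [egfCoeff_apply, egfCoeff_apply, ← add_choose_mul_factorial_mul_factorial, choose_symm_add]
  push_cast
  ring

theorem egfCoeff_derivative (n : ℕ) (f : R⟦X⟧) :
    egfCoeff n (d⁄dX R f) = egfCoeff (n + 1) f := by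
  rw [egfCoeff_apply, egfCoeff_apply, coeff_derivative, factorial_succ]
  push_cast
  ring

theorem egfCoeff_X (n : ℕ) : egfCoeff n (X : R⟦X⟧) = if n = 1 then 1 else 0 := by
  rw [egfCoeff_apply, coeff_X]
  split_ifs with h <;> simp [h]

theorem egfCoeff_succ_of_derivative_eq {L : R} {ψ : R⟦X⟧}
    (h : d⁄dX R ψ = X + C (1 + L) * ψ + C L * (ψ * d⁄dX R ψ)) (n : ℕ) :
    egfCoeff (n + 1) ψ = (if n = 1 then 1 else 0) + (1 + L) * egfCoeff n ψ
      + L * ∑ p ∈ antidiagonal n, n.choose p.1 * (egfCoeff p.1 ψ * egfCoeff (p.2 + 1) ψ) := by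
  rw [← egfCoeff_derivative, h, ← smul_eq_C_mul, ← smul_eq_C_mul]
  simp only [map_add, map_smul, egfCoeff_mul, egfCoeff_derivative, egfCoeff_X,
    smul_eq_mul]

theorem egfCoeff_mem_of_derivative_eq {S : Subsemiring R} {L : R} (hL : L ∈ S) {ψ : R⟦X⟧}
    (h0 : coeff 0 ψ = 0) (h : d⁄dX R ψ = X + C (1 + L) * ψ + C L * (ψ * d⁄dX R ψ)) (n : ℕ) :
    egfCoeff n ψ ∈ S := by
  induction n using Nat.strong_induction_on with
  | _ n ih =>
    rcases n with _ | n
    · simp [egfCoeff_apply, h0]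
    rw [egfCoeff_succ_of_derivative_eq h]
    have hif : (if n = 1 then 1 else 0 : R) ∈ S := by split_ifs <;> simp
    refine add_mem (add_mem hif (mul_mem (add_mem (one_mem S) hL) (ih n n.lt_succ_self)))
      (mul_mem hL (sum_mem fun p hp => mul_mem (natCast_mem S _) ?_))
    -- `bⱼ₊₁` with `j = n` is not covered by the induction hypothesis, but it comes with `b₀ = 0`.
    obtain ⟨_ | i, j⟩ := p
    · simp [egfCoeff_apply, h0]
    · simp only [HasAntidiagonal.mem_antidiagonal] at hp
      exact mul_mem (ih _ (by omega)) (ih _ (by omega))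

end CommSemiring

theorem derivative_sub_X_eq {R : Type*} [CommRing R] {L : R} {f : R⟦X⟧}
    (h : (1 + C L * X - C L * f) * d⁄dX R f = 1 + f) :
    d⁄dX R (f - X) = X + C (1 + L) * (f - X) + C L * ((f - X) * d⁄dX R (f - X)) := by
  rw [map_sub, derivative_X, map_add, map_one]
  linear_combination h

end PowerSeries

namespace Polynomial

variable {R : Type*} [CommRing R]

variable (R) in
/-- Sums `Σ cₖ 𝕋ᵏ` with `cₖ ∈ ℕ` and `𝕋 = X - 1`. -/
noncomputable def torified : Subsemiring R[X] :=
  (eval₂RingHom (Nat.castRingHom R[X]) (X - 1)).rangeS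

theorem mem_torified_iff {p : R[X]} :
    p ∈ torified R ↔ ∃ c : ℕ →₀ ℕ, p = c.sum fun k m => (m : R[X]) * (X - 1) ^ k := by
  constructor
  · rintro ⟨q, rfl⟩
    refine ⟨q.toFinsupp.coeff, ?_⟩
    rw [coe_eval₂RingHom, eval₂_eq_sum, Polynomial.sum_def, Finsupp.sum]
    rfl
  · rintro ⟨c, rfl⟩
    refine ⟨⟨AddMonoidAlgebra.ofCoeff c⟩, ?_⟩
    rw [coe_eval₂RingHom, eval₂_eq_sum, Polynomial.sum_def, Finsupp.sum]
    rfl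

theorem X_mem_torified : (X : R[X]) ∈ torified R := ⟨X + 1, by simp⟩

end Polynomial

open Polynomial in
theorem grothendieck_class_M0n_torified_general
    (φ : PowerSeries (Polynomial ℚ))
    (h0 : PowerSeries.coeff 0 φ = 0)
    (heq : (1 + PowerSeries.C (X : ℚ[X]) * PowerSeries.X
        - PowerSeries.C (X : ℚ[X]) * φ) * φ.derivativeFun = 1 + φ)
    (a : ℕ → ℚ[X])
    (ha : ∀ n, a n = (n.factorial : ℚ[X]) * PowerSeries.coeff n φ) :
    ∀ n : ℕ, 1 ≤ n → ∃ c : ℕ →₀ ℕ,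
      a n = c.sum fun k m => (m : ℚ[X]) * (X - 1) ^ k := by
  intro n _
  have hψ : PowerSeries.egfCoeff n (φ - PowerSeries.X) ∈ torified ℚ :=
    PowerSeries.egfCoeff_mem_of_derivative_eq X_mem_torified
      (by rw [map_sub, h0, PowerSeries.coeff_zero_X, sub_zero])
      (PowerSeries.derivative_sub_X_eq heq) n
  have han : a n = PowerSeries.egfCoeff n (φ - PowerSeries.X)
      + PowerSeries.egfCoeff n PowerSeries.X := by
    rw [ha, ← map_add, sub_add_cancel, PowerSeries.egfCoeff_apply]
  refine mem_torified_iff.1 (han ▸ add_mem hψ ?_)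
  rw [PowerSeries.egfCoeff_X]
  split_ifs <;> simp

open Polynomial in
/-- With `φ` the unique solution of `(1 + L·t − L·φ)·φ′ = 1 + φ` in
`t + t²·ℚ[L][[t]]` and `aₙ := n!·(coeff of tⁿ in φ)`, every `aₙ` (`n ≥ 1`) is a sum
`Σ_k c(k)·(L − 1)^k` with finitely supported `c : ℕ → ℕ`: it has nonnegative integer
coefficients as a polynomial in `T = L − 1`. -/
theorem grothendieck_class_M0n_torified
    (φ : PowerSeries (Polynomial ℚ))
    (h0 : PowerSeries.coeff 0 φ = 0) (h1 : PowerSeries.coeff 1 φ = 1)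
    (heq : (1 + PowerSeries.C (X : ℚ[X]) * PowerSeries.X
        - PowerSeries.C (X : ℚ[X]) * φ) * φ.derivativeFun = 1 + φ)
    (a : ℕ → ℚ[X])
    (ha : ∀ n, a n = (n.factorial : ℚ[X]) * PowerSeries.coeff n φ) :
    ∀ n : ℕ, 1 ≤ n → ∃ c : ℕ →₀ ℕ,
      a n = c.sum fun k m => (m : ℚ[X]) * (X - 1) ^ k :=
  grothendieck_class_M0n_torified_general φ h0 heq a ha
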